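/- Let I ⊆ T be an interval. The interval module C(I) is lower semi-continuous if and only if I = overline(I), and C(I) is upper semi-continuous if and only if I = underline(I). -/

import Mathlib

open CategoryTheory CategoryTheory.Limits

set_option maxHeartbeats 1000000
set_option synthInstance.maxHeartbeats 200000

/-- A persistence module over a totally ordered set `T`: a functor from `T` (viewed as a
category via its order) to the category of `F`-vector spaces. -/
abbrev PersistenceModule (F : Type) [Field F] (T : Type) [LinearOrder T] :=
  T ⥤ ModuleCat.{0} F

variable (F : Type) [Field F] (T : Type) [LinearOrder T]

/-- The inclusion functor of the strict up-set of `t` into `T`. -/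
def upFunctor (t : T) : {s : T // t < s} ⥤ T :=
  Monotone.functor (f := (Subtype.val : {s : T // t < s} → T)) (fun _ _ h => h)

/-- The inclusion functor of the strict down-set of `t` into `T`. -/
def downFunctor (t : T) : {s : T // s < t} ⥤ T :=
  Monotone.functor (f := (Subtype.val : {s : T // s < t} → T)) (fun _ _ h => h)

/-- `underline M`, with `(underline M)_t = lim_{s > t} M_s` (the limit over the empty
category being `0`). -/
noncomputable def underlinePM (M : PersistenceModule F T) : PersistenceModule F T where
  obj t := limit (upFunctor T t ⋙ M)
  map {s t} f := limit.lift (upFunctor T t ⋙ M)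
    { pt := limit (upFunctor T s ⋙ M)
      π :=
        { app := fun u => limit.π (upFunctor T s ⋙ M) ⟨u.1, lt_of_le_of_lt (leOfHom f) u.2⟩
          naturality := fun u v g => by
            exact (Category.id_comp _).trans
              (limit.w (upFunctor T s ⋙ M) (homOfLE (leOfHom g))).symm } }
  map_id t := by
    apply limit.hom_ext
    intro u
    simp
  map_comp {s t u} f g := by
    apply limit.hom_ext
    intro v
    simp
    erw [limit.lift_π]

/-- `overline M`, with `(overline M)_t = colim_{s < t} M_s` (the colimit over the empty
category being `0`). -/
noncomputable def overlinePM (M : PersistenceModule F T) : PersistenceModule F T where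
  obj t := colimit (downFunctor T t ⋙ M)
  map {s t} f := colimit.desc (downFunctor T s ⋙ M)
    { pt := colimit (downFunctor T t ⋙ M)
      ι :=
        { app := fun u => colimit.ι (downFunctor T t ⋙ M) ⟨u.1, lt_of_lt_of_le u.2 (leOfHom f)⟩
          naturality := fun u v g => by
            have h : (⟨u.1, lt_of_lt_of_le u.2 (leOfHom f)⟩ : {x : T // x < t}) ⟶
                ⟨v.1, lt_of_lt_of_le v.2 (leOfHom f)⟩ := homOfLE (leOfHom g)
            exact (colimit.w (downFunctor T t ⋙ M) h).trans (Category.comp_id _).symm } }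
  map_id t := by
    apply colimit.hom_ext
    intro u
    simp
  map_comp {s t u} f g := by
    apply colimit.hom_ext
    intro v
    simp
    erw [colimit.ι_desc]

/-- The canonical morphism `M ⟶ underline M` given by the universal property of the limits. -/
noncomputable def toUnderline (M : PersistenceModule F T) : M ⟶ underlinePM F T M where
  app t := limit.lift (upFunctor T t ⋙ M)
    { pt := M.obj t
      π :=
        { app := fun u => M.map (homOfLE u.2.le)
          naturality := fun u v g => by
            dsimp
            rw [Category.id_comp, ← M.map_comp]
            rfl } }
  naturality s t f := by
    apply limit.hom_ext
    intro u
    simp only [underlinePM, Category.assoc, limit.lift_π, ← M.map_comp]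
    erw [limit.lift_π]
    rfl

/-- The canonical morphism `overline M ⟶ M` given by the universal property of the colimits. -/
noncomputable def fromOverline (M : PersistenceModule F T) : overlinePM F T M ⟶ M where
  app t := colimit.desc (downFunctor T t ⋙ M)
    { pt := M.obj t
      ι :=
        { app := fun u => M.map (homOfLE u.2.le)
          naturality := fun u v g => by
            dsimp
            rw [Category.comp_id, ← M.map_comp]
            rfl } }
  naturality s t f := by
    apply colimit.hom_ext
    intro u
    simp only [overlinePM, colimit.ι_desc_assoc, colimit.ι_desc, ← M.map_comp]
    erw [colimit.ι_desc]
    rfl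

/-- `M` is upper semi-continuous if the canonical map `M_t → lim_{s > t} M_s` is an
isomorphism for all `t`. -/
noncomputable def IsUSC (M : PersistenceModule F T) : Prop :=
  ∀ t : T, IsIso ((toUnderline F T M).app t)

/-- `M` is lower semi-continuous if the canonical map `colim_{s < t} M_s → M_t` is an
isomorphism for all `t`. -/
noncomputable def IsLSC (M : PersistenceModule F T) : Prop :=
  ∀ t : T, IsIso ((fromOverline F T M).app t)

/-- `M` is ephemeral if all structure maps `M_{s,t}` with `s < t` vanish. -/
def Ephemeral (M : PersistenceModule F T) : Prop :=
  ∀ s t : T, ∀ h : s < t, M.map (homOfLE h.le) = 0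

/-- `M` is q-tame if all structure maps `M_{s,t}` with `s < t` have finite rank. -/
def QTame (M : PersistenceModule F T) : Prop :=
  ∀ s t : T, ∀ h : s < t, Module.Finite F (LinearMap.range (M.map (homOfLE h.le)).hom)

/-- A morphism of persistence modules is a weak isomorphism if its kernel and cokernel
are ephemeral. -/
noncomputable def IsWeakIso {M N : PersistenceModule F T} (φ : M ⟶ N) : Prop :=
  Ephemeral F T (kernel φ) ∧ Ephemeral F T (cokernel φ)

open Classical

/-- The interval module `C(I)`: the field `F` at points of `I` with identity structure
maps inside `I`, and `0` elsewhere (in particular `C(∅) = 0`). -/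
noncomputable def intervalModule (I : Set T) : PersistenceModule F T where
  obj t := ModuleCat.of F (↥(if t ∈ I then (⊤ : Submodule F F) else (⊥ : Submodule F F)))
  map {s t} f :=
    if h : Set.Icc s t ⊆ I then
      ModuleCat.ofHom (Submodule.inclusion
        (p := if s ∈ I then (⊤ : Submodule F F) else (⊥ : Submodule F F))
        (p' := if t ∈ I then (⊤ : Submodule F F) else (⊥ : Submodule F F)) (by
        rw [if_pos (h (Set.right_mem_Icc.mpr (leOfHom f)))]
        exact le_top))
    else 0
  map_id t := by
    by_cases ht : t ∈ I
    · rw [dif_pos (by simpa using ht)]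
      rfl
    · have h : ¬ Set.Icc t t ⊆ I := by simpa using ht
      rw [dif_neg h]
      have hs : Subsingleton (↥(if t ∈ I then (⊤ : Submodule F F) else (⊥ : Submodule F F))) := by
        rw [if_neg ht]
        infer_instance
      apply ModuleCat.hom_ext
      apply LinearMap.ext
      intro x
      exact @Subsingleton.elim _ hs _ _
  map_comp {s t u} f g := by
    by_cases h : Set.Icc s u ⊆ I
    · have h1 : Set.Icc s t ⊆ I :=
        fun x hx => h ⟨hx.1, le_trans hx.2 (leOfHom g)⟩
      have h2 : Set.Icc t u ⊆ I :=
        fun x hx => h ⟨le_trans (leOfHom f) hx.1, hx.2⟩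
      rw [dif_pos h, dif_pos h1, dif_pos h2]
      rfl
    · rw [dif_neg h]
      by_cases h1 : Set.Icc s t ⊆ I
      · have h2 : ¬ Set.Icc t u ⊆ I := fun h2 => h (by
          intro x hx
          rcases le_total x t with hxt | htx
          · exact h1 ⟨hx.1, hxt⟩
          · exact h2 ⟨htx, hx.2⟩)
        rw [dif_pos h1, dif_neg h2, Limits.comp_zero]
      · rw [dif_neg h1, Limits.zero_comp]

/-- Functoriality of `overline` on morphisms. -/
noncomputable def overlineMap {M N : PersistenceModule F T} (φ : M ⟶ N) :
    overlinePM F T M ⟶ overlinePM F T N where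
  app t := colimMap (Functor.whiskerLeft (downFunctor T t) φ)
  naturality s t f := by
    apply colimit.hom_ext
    intro u
    simp [overlinePM]
    erw [ι_colimMap]
    rfl

/-- Functoriality of `underline` on morphisms. -/
noncomputable def underlineMap {M N : PersistenceModule F T} (φ : M ⟶ N) :
    underlinePM F T M ⟶ underlinePM F T N where
  app t := limMap (Functor.whiskerLeft (upFunctor T t) φ)
  naturality s t f := by
    apply limit.hom_ext
    intro u
    simp [underlinePM]
    erw [limMap_π]
    rfl

/-- The radical of a persistence module: the image of the canonical morphism
`overline M ⟶ M`. -/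
noncomputable def radPM (M : PersistenceModule F T) : PersistenceModule F T :=
  image (fromOverline F T M)

/-- The canonical morphism from the direct sum to the product of a collection of
persistence modules. -/
noncomputable def sumToProd {A : Type} (M : A → PersistenceModule F T) :
    (∐ M) ⟶ (∏ᶜ M) :=
  Sigma.desc fun a => Pi.lift fun b =>
    if h : a = b then eqToHom (congrArg M h) else 0

/-- The pointwise dual persistence module `M*`, indexed by the opposite order. -/
noncomputable def dualPM (M : PersistenceModule F T) : PersistenceModule F Tᵒᵈ where
  obj t := ModuleCat.of F (Module.Dual F (M.obj (OrderDual.ofDual t)))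
  map {s t} f :=
    ModuleCat.ofHom
      (M.map (homOfLE (leOfHom f : OrderDual.ofDual t ≤ OrderDual.ofDual s))).hom.dualMap
  map_id t := by
    change ModuleCat.ofHom (M.map (𝟙 (OrderDual.ofDual t))).hom.dualMap = _
    rw [M.map_id]
    rfl
  map_comp {s t u} f g := by
    change ModuleCat.ofHom (M.map ((homOfLE (leOfHom g : OrderDual.ofDual u ≤ OrderDual.ofDual t)) ≫
        (homOfLE (leOfHom f : OrderDual.ofDual t ≤ OrderDual.ofDual s)))).hom.dualMap = _
    rw [M.map_comp]
    rfl

/-- `I` is an interval in a totally ordered set: if `s ≤ t ≤ u` with `s, u ∈ I`, then `t ∈ I`. -/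
def IsInterval {T : Type*} [LinearOrder T] (I : Set T) : Prop :=
  ∀ ⦃s t u : T⦄, s ≤ t → t ≤ u → s ∈ I → u ∈ I → t ∈ I

/-- `underline I`: the set of `t` such that `I ∩ {s | t < s}` is nonempty and coinitial
in `{s | t < s}`. -/
def underlineSet {T : Type*} [LinearOrder T] (I : Set T) : Set T :=
  {t | (I ∩ Set.Ioi t).Nonempty ∧ ∀ s ∈ Set.Ioi t, ∃ u ∈ I ∩ Set.Ioi t, u ≤ s}

/-- `overline I`: the set of `t` such that `I ∩ {s | s < t}` is nonempty and cofinal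
in `{s | s < t}`. -/
def overlineSet {T : Type*} [LinearOrder T] (I : Set T) : Set T :=
  {t | (I ∩ Set.Iio t).Nonempty ∧ ∀ s ∈ Set.Iio t, ∃ u ∈ I ∩ Set.Iio t, s ≤ u}

/-- `rad I = I ∩ overline I`. -/
def radSet {T : Type*} [LinearOrder T] (I : Set T) : Set T :=
  I ∩ overlineSet I


/-!
If `t ∈ overline I` and `u ∈ I` lies below `t`, the interval `I` contains `[u, t)`, so the
diagram `s ↦ C(I)_s` on `s < t` is constant `F` from `u` on and the fibre inclusions
`C(I)_s ⊆ F` form a colimit cocone: `colim_{s<t} C(I)_s ≅ F`. If `t ∉ overline I`, every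
`s < t` is followed by a point of `[s, t)` outside `I`, where all of `C(I)_s` dies, so the
colimit is `0`. Hence `colim_{s<t} C(I)_s → C(I)_t` is an isomorphism exactly when
`t ∈ I ↔ t ∈ overline I`. Dually, with the projections `F → C(I)_s` forming a limit cone,
`C(I)_t → lim_{s>t} C(I)_s` is an isomorphism exactly when `t ∈ I ↔ t ∈ underline I`.
-/

section

variable {α : Type*} [LinearOrder α] {I : Set α}

lemma IsInterval.ordConnected (hI : IsInterval I) : I.OrdConnected :=
  ⟨fun _ ha _ hb _ hx => hI hx.1 hx.2 ha hb⟩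

lemma mem_overlineSet_of_Ico_subset {u t : α} (hut : u < t) (h : Set.Ico u t ⊆ I) :
    t ∈ overlineSet I :=
  ⟨⟨u, h ⟨le_rfl, hut⟩, hut⟩, fun s hs =>
    ⟨max u s, ⟨h ⟨le_max_left _ _, max_lt hut hs⟩, max_lt hut hs⟩, le_max_right _ _⟩⟩

lemma mem_underlineSet_of_Ioc_subset {t u : α} (htu : t < u) (h : Set.Ioc t u ⊆ I) :
    t ∈ underlineSet I :=
  ⟨⟨u, h ⟨htu, le_rfl⟩, htu⟩, fun s hs =>
    ⟨min u s, ⟨h ⟨lt_min htu hs, min_le_left _ _⟩, lt_min htu hs⟩, min_le_right _ _⟩⟩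

lemma IsInterval.Ico_subset_of_mem_overlineSet (hI : IsInterval I) {u t : α}
    (hu : u ∈ I) (ht : t ∈ overlineSet I) : Set.Ico u t ⊆ I := fun x hx => by
  obtain ⟨w, ⟨hw, -⟩, hxw⟩ := ht.2 x hx.2
  exact hI hx.1 hxw hu hw

lemma IsInterval.Ioc_subset_of_mem_underlineSet (hI : IsInterval I) {t u : α}
    (hu : u ∈ I) (ht : t ∈ underlineSet I) : Set.Ioc t u ⊆ I := fun x hx => by
  obtain ⟨w, ⟨hw, -⟩, hwx⟩ := ht.2 x hx.1
  exact hI hwx hx.2 hw hu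

end

lemma ι_fromOverline_app (M : PersistenceModule F T) (t : T) (v : {s : T // s < t}) :
    colimit.ι (downFunctor T t ⋙ M) v ≫ (fromOverline F T M).app t = M.map (homOfLE v.2.le) :=
  colimit.ι_desc _ _

lemma toUnderline_app_π (M : PersistenceModule F T) (t : T) (v : {s : T // t < s}) :
    (toUnderline F T M).app t ≫ limit.π (upFunctor T t ⋙ M) v = M.map (homOfLE v.2.le) :=
  limit.lift_π _ _

lemma ModuleCat.not_isZero_of_nontrivial (R : Type*) [Ring R] [Nontrivial R] :
    ¬ IsZero (ModuleCat.of R R) := by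
  rw [ModuleCat.isZero_of_iff_subsingleton]
  exact not_subsingleton R

namespace intervalModule

variable {T} {I : Set T}

noncomputable def incl (I : Set T) (t : T) : (intervalModule F T I).obj t ⟶ ModuleCat.of F F :=
  ModuleCat.ofHom (Submodule.subtype _)

noncomputable def proj (I : Set T) (t : T) : ModuleCat.of F F ⟶ (intervalModule F T I).obj t :=
  ModuleCat.ofHom (LinearMap.codRestrict _ (if t ∈ I then LinearMap.id else 0) fun _ => by
    split_ifs
    exacts [Submodule.mem_top, Submodule.zero_mem _])

variable {F}

lemma isZero_obj {t : T} (ht : t ∉ I) : IsZero ((intervalModule F T I).obj t) := by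
  rw [ModuleCat.isZero_iff_subsingleton]
  change Subsingleton ↥(if t ∈ I then (⊤ : Submodule F F) else ⊥)
  rw [if_neg ht]
  infer_instance

lemma incl_comp_proj (t : T) : incl F I t ≫ proj F I t = 𝟙 ((intervalModule F T I).obj t) := by
  by_cases ht : t ∈ I
  · refine ModuleCat.hom_ext (LinearMap.ext fun x => Subtype.ext ?_)
    change (if t ∈ I then LinearMap.id else (0 : F →ₗ[F] F)) x.1 = x.1
    rw [if_pos ht, LinearMap.id_apply]
  · exact (isZero_obj ht).eq_of_src _ _

lemma proj_comp_incl {t : T} (ht : t ∈ I) :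
    proj F I t ≫ incl F I t = 𝟙 (ModuleCat.of F F) := by
  refine ModuleCat.hom_ext (LinearMap.ext fun x => ?_)
  change (if t ∈ I then LinearMap.id else (0 : F →ₗ[F] F)) x = x
  rw [if_pos ht, LinearMap.id_apply]

lemma isIso_incl {t : T} (ht : t ∈ I) : IsIso (incl F I t) :=
  ⟨proj F I t, incl_comp_proj t, proj_comp_incl ht⟩

lemma isIso_proj {t : T} (ht : t ∈ I) : IsIso (proj F I t) :=
  ⟨incl F I t, proj_comp_incl ht, incl_comp_proj t⟩

lemma isZero_obj_iff {t : T} : IsZero ((intervalModule F T I).obj t) ↔ t ∉ I := by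
  refine ⟨fun h ht => ModuleCat.not_isZero_of_nontrivial F ?_, isZero_obj⟩
  have := isIso_incl (F := F) ht
  exact h.of_iso (asIso (incl F I t)).symm

lemma map_comp_incl {a b : T} (f : a ⟶ b) (h : Set.Icc a b ⊆ I) :
    (intervalModule F T I).map f ≫ incl F I b = incl F I a := by
  ext x
  simp only [intervalModule, dif_pos h]
  rfl

lemma incl_comp_proj_eq_map {a b : T} (f : a ⟶ b) (h : Set.Icc a b ⊆ I) :
    incl F I a ≫ proj F I b = (intervalModule F T I).map f := by
  rw [← map_comp_incl f h, Category.assoc, incl_comp_proj, Category.comp_id]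

lemma proj_comp_map {a b : T} (f : a ⟶ b) (h : Set.Icc a b ⊆ I) :
    proj F I a ≫ (intervalModule F T I).map f = proj F I b := by
  rw [← incl_comp_proj_eq_map f h, ← Category.assoc,
    proj_comp_incl (h (Set.left_mem_Icc.2 (leOfHom f))), Category.id_comp]

variable (F) in
noncomputable def inclCocone (hI : IsInterval I) {t : T} (ht : t ∈ overlineSet I) :
    Cocone (downFunctor T t ⋙ intervalModule F T I) where
  pt := ModuleCat.of F F
  ι :=
    { app := fun v => incl F I v.1
      naturality := fun v w f => by
        by_cases hv : v.1 ∈ I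
        · exact (map_comp_incl (homOfLE (leOfHom f : v.1 ≤ w.1))
            ((Set.Icc_subset_Ico_right w.2).trans (hI.Ico_subset_of_mem_overlineSet hv ht))).trans
              (Category.comp_id _).symm
        · exact (isZero_obj hv).eq_of_src _ _ }

noncomputable def isColimitInclCocone (hI : IsInterval I) {t : T} (ht : t ∈ overlineSet I)
    {u : T} (hu : u ∈ I) (hut : u < t) : IsColimit (inclCocone F hI ht) where
  desc s := proj F I u ≫ s.ι.app ⟨u, hut⟩
  fac s v := by
    -- the legs of `s`, retyped over the fibres of `C(I)` so that `rw` sees through `downFunctor`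
    let ι (v : {s : T // s < t}) : (intervalModule F T I).obj v.1 ⟶ s.pt := s.ι.app v
    have hι (v w : {s : T // s < t}) (h : v.1 ≤ w.1) :
        (intervalModule F T I).map (homOfLE h) ≫ ι w = ι v := s.w (homOfLE h)
    change incl F I v.1 ≫ proj F I u ≫ ι ⟨u, hut⟩ = ι v
    by_cases hv : v.1 ∈ I
    · let w : {s : T // s < t} := ⟨max u v.1, max_lt hut v.2⟩
      have hIu := hI.Ico_subset_of_mem_overlineSet hu ht
      have hIv := hI.Ico_subset_of_mem_overlineSet hv ht
      rw [← hι ⟨u, hut⟩ w (le_max_left _ _), ← hι v w (le_max_right _ _),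
        ← Category.assoc (proj F I u), proj_comp_map _ ((Set.Icc_subset_Ico_right w.2).trans hIu),
        ← Category.assoc, incl_comp_proj_eq_map _ ((Set.Icc_subset_Ico_right w.2).trans hIv)]
    · exact (isZero_obj hv).eq_of_src _ _
  uniq s m hm := by
    rw [← hm]
    exact (Category.id_comp m).symm.trans
      ((proj_comp_incl hu =≫ m).symm.trans (Category.assoc _ _ _))

lemma isZero_colimit_of_not_mem_overlineSet {t : T} (ht : t ∉ overlineSet I) :
    IsZero (colimit (downFunctor T t ⋙ intervalModule F T I)) := by
  refine (IsZero.iff_id_eq_zero _).2 (colimit.hom_ext fun v => ?_)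
  obtain ⟨w, hw, hwI⟩ : ∃ w ∈ Set.Ico v.1 t, w ∉ I := by
    by_contra! h
    exact ht (mem_overlineSet_of_Ico_subset v.2 h)
  let f : v ⟶ ⟨w, hw.2⟩ := homOfLE hw.1
  have hf : (downFunctor T t ⋙ intervalModule F T I).map f = 0 := (isZero_obj hwI).eq_of_tgt _ _
  rw [Category.comp_id, comp_zero, ← colimit.w _ f, hf, zero_comp]

lemma isZero_colimit_iff (hI : IsInterval I) {t : T} :
    IsZero (colimit (downFunctor T t ⋙ intervalModule F T I)) ↔ t ∉ overlineSet I := by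
  refine ⟨fun h ht => ?_, isZero_colimit_of_not_mem_overlineSet⟩
  obtain ⟨u, hu, hut⟩ := ht.1
  exact ModuleCat.not_isZero_of_nontrivial F
    (h.of_iso ((isColimitInclCocone hI ht hu hut).coconePointUniqueUpToIso (colimit.isColimit _)))

lemma isIso_fromOverline_app (hI : IsInterval I) {t : T} (ht : t ∈ I)
    (ht' : t ∈ overlineSet I) :
    IsIso ((fromOverline F T (intervalModule F T I)).app t) := by
  obtain ⟨u, hu, hut⟩ := ht'.1
  have := isIso_incl (F := F) ht
  have hfac : (fromOverline F T (intervalModule F T I)).app t ≫ incl F I t =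
      (colimit.isoColimitCocone ⟨_, isColimitInclCocone hI ht' hu hut⟩).hom := by
    refine colimit.hom_ext fun v => ?_
    erw [colimit.isoColimitCocone_ι_hom, ← Category.assoc, ι_fromOverline_app]
    by_cases hv : v.1 ∈ I
    · exact map_comp_incl _ (hI.ordConnected.out hv ht)
    · exact (isZero_obj hv).eq_of_src _ _
  exact IsIso.of_isIso_fac_right (hh := Iso.isIso_hom _) hfac

lemma isIso_fromOverline_app_iff (hI : IsInterval I) (t : T) :
    IsIso ((fromOverline F T (intervalModule F T I)).app t) ↔
      (t ∈ I ↔ t ∈ overlineSet I) := by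
  constructor
  · intro h
    have := (asIso ((fromOverline F T (intervalModule F T I)).app t)).isZero_iff
    rw [isZero_obj_iff] at this
    exact not_iff_not.1 ((isZero_colimit_iff hI).symm.trans this).symm
  · intro h
    by_cases ht : t ∈ I
    · exact isIso_fromOverline_app hI ht (h.1 ht)
    · exact isIso_of_source_target_iso_zero _
        (isZero_colimit_of_not_mem_overlineSet (mt h.2 ht)).isoZero (isZero_obj ht).isoZero

variable (F) in
noncomputable def projCone (hI : IsInterval I) {t : T} (ht : t ∈ underlineSet I) :
    Cone (upFunctor T t ⋙ intervalModule F T I) where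
  pt := ModuleCat.of F F
  π :=
    { app := fun v => proj F I v.1
      naturality := fun v w f => by
        by_cases hw : w.1 ∈ I
        · exact (Category.id_comp _).trans (proj_comp_map (homOfLE (leOfHom f : v.1 ≤ w.1))
            ((Set.Icc_subset_Ioc_left v.2).trans (hI.Ioc_subset_of_mem_underlineSet hw ht))).symm
        · exact (isZero_obj hw).eq_of_tgt _ _ }

noncomputable def isLimitProjCone (hI : IsInterval I) {t : T} (ht : t ∈ underlineSet I)
    {u : T} (hu : u ∈ I) (htu : t < u) : IsLimit (projCone F hI ht) where
  lift s := s.π.app ⟨u, htu⟩ ≫ incl F I u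
  fac s v := by
    let π (v : {s : T // t < s}) : s.pt ⟶ (intervalModule F T I).obj v.1 := s.π.app v
    have hπ (v w : {s : T // t < s}) (h : v.1 ≤ w.1) :
        π v ≫ (intervalModule F T I).map (homOfLE h) = π w :=
      s.w (homOfLE h : v ⟶ w)
    change (π ⟨u, htu⟩ ≫ incl F I u) ≫ proj F I v.1 = π v
    by_cases hv : v.1 ∈ I
    · let w : {s : T // t < s} := ⟨min u v.1, lt_min htu v.2⟩
      have hIu := hI.Ioc_subset_of_mem_underlineSet hu ht
      have hIv := hI.Ioc_subset_of_mem_underlineSet hv ht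
      rw [← hπ w ⟨u, htu⟩ (min_le_left _ _), ← hπ w v (min_le_right _ _), Category.assoc,
        Category.assoc, ← Category.assoc ((intervalModule F T I).map _),
        map_comp_incl _ ((Set.Icc_subset_Ioc_left w.2).trans hIu),
        incl_comp_proj_eq_map _ ((Set.Icc_subset_Ioc_left w.2).trans hIv)]
    · exact (isZero_obj hv).eq_of_tgt _ _
  uniq s m hm := by
    rw [← hm]
    exact (Category.comp_id m).symm.trans
      ((m ≫= proj_comp_incl hu).symm.trans (Category.assoc _ _ _).symm)

lemma isZero_limit_of_not_mem_underlineSet {t : T} (ht : t ∉ underlineSet I) :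
    IsZero (limit (upFunctor T t ⋙ intervalModule F T I)) := by
  refine (IsZero.iff_id_eq_zero _).2 (limit.hom_ext fun v => ?_)
  obtain ⟨w, hw, hwI⟩ : ∃ w ∈ Set.Ioc t v.1, w ∉ I := by
    by_contra! h
    exact ht (mem_underlineSet_of_Ioc_subset v.2 h)
  let f : (⟨w, hw.1⟩ : {s : T // t < s}) ⟶ v := homOfLE hw.2
  have hf : (upFunctor T t ⋙ intervalModule F T I).map f = 0 := (isZero_obj hwI).eq_of_src _ _
  rw [Category.id_comp, zero_comp, ← limit.w _ f, hf, comp_zero]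

lemma isZero_limit_iff (hI : IsInterval I) {t : T} :
    IsZero (limit (upFunctor T t ⋙ intervalModule F T I)) ↔ t ∉ underlineSet I := by
  refine ⟨fun h ht => ?_, isZero_limit_of_not_mem_underlineSet⟩
  obtain ⟨u, hu, htu⟩ := ht.1
  exact ModuleCat.not_isZero_of_nontrivial F
    (h.of_iso ((isLimitProjCone hI ht hu htu).conePointUniqueUpToIso (limit.isLimit _)))

lemma isIso_toUnderline_app (hI : IsInterval I) {t : T} (ht : t ∈ I)
    (ht' : t ∈ underlineSet I) :
    IsIso ((toUnderline F T (intervalModule F T I)).app t) := by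
  obtain ⟨u, hu, htu⟩ := ht'.1
  have := isIso_proj (F := F) ht
  have hfac : proj F I t ≫ (toUnderline F T (intervalModule F T I)).app t =
      (limit.isoLimitCone ⟨_, isLimitProjCone hI ht' hu htu⟩).inv := by
    refine limit.hom_ext fun v => ?_
    erw [limit.isoLimitCone_inv_π, Category.assoc, toUnderline_app_π]
    by_cases hv : v.1 ∈ I
    · exact proj_comp_map _ (hI.ordConnected.out ht hv)
    · exact (isZero_obj hv).eq_of_tgt _ _
  exact IsIso.of_isIso_fac_left (hh := Iso.isIso_inv _) hfac

lemma isIso_toUnderline_app_iff (hI : IsInterval I) (t : T) :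
    IsIso ((toUnderline F T (intervalModule F T I)).app t) ↔
      (t ∈ I ↔ t ∈ underlineSet I) := by
  constructor
  · intro h
    have := (asIso ((toUnderline F T (intervalModule F T I)).app t)).isZero_iff
    rw [isZero_obj_iff] at this
    exact not_iff_not.1 (this.trans (isZero_limit_iff hI))
  · intro h
    by_cases ht : t ∈ I
    · exact isIso_toUnderline_app hI ht (h.1 ht)
    · exact isIso_of_source_target_iso_zero _
        (isZero_obj ht).isoZero (isZero_limit_of_not_mem_underlineSet (mt h.2 ht)).isoZero

end intervalModule

/-- `C(I)` is lower semi-continuous iff `I = overline I`, and upper semi-continuous iff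
`I = underline I`. -/
theorem intervalModule_semicontinuous_iff (I : Set T) (hI : IsInterval I) :
    (IsLSC F T (intervalModule F T I) ↔ I = overlineSet I) ∧
    (IsUSC F T (intervalModule F T I) ↔ I = underlineSet I) := by
  simp only [IsLSC, IsUSC, intervalModule.isIso_fromOverline_app_iff hI,
    intervalModule.isIso_toUnderline_app_iff hI, Set.ext_iff, and_self]
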